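/- Let k ≥ 1, let G be a minimally k-edge-connected finite simple graph on V with |V| ≥ 2, fix a root r ∈ V, and let n_k(G) denote the number of vertices of G of degree k. Then the number of snug vertices v for which there exist no snug vertex u and snug shores (T₁, T₂) for u and (S₁, S₂) for v with T₂ = S₁ is strictly less than 2·n_k(G). (Equivalently, since the chain graph is a vertex-disjoint union of directed paths and each maximal path has a unique starting vertex without incoming arc, the number of snug paths satisfies |𝓟^G_chain| < 2·n_k(G).) -/

import Mathlib

open Finset

variable {V : Type*} [Fintype V] [DecidableEq V]

/-- `Crosses S e`: exactly one endpoint of the edge/link `e` lies in `S`. -/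
def Crosses (S : Finset V) (e : Sym2 V) : Prop :=
  ∃ x y : V, e = s(x, y) ∧ x ∈ S ∧ y ∉ S

instance (S : Finset V) : DecidablePred (Crosses S) := fun e =>
  decidable_of_iff (∃ x y : V, e = s(x, y) ∧ x ∈ S ∧ y ∉ S) Iff.rfl

/-- The cut `δ(S)`: edges of `G` with exactly one endpoint in `S`. -/
def cutEdges (G : SimpleGraph V) [DecidableRel G.Adj] (S : Finset V) :
    Finset (Sym2 V) :=
  G.edgeFinset.filter fun e => Crosses S e

/-- `G` is `k`-edge-connected: every nonempty proper cut has at least `k` crossing edges. -/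
def EdgeConnected (G : SimpleGraph V) [DecidableRel G.Adj] (k : ℕ) : Prop :=
  ∀ S : Finset V, S.Nonempty → S ≠ Finset.univ → k ≤ (cutEdges G S).card

/-- `S` is a `k`-cut: a nonempty proper vertex set with exactly `k` crossing edges. -/
def IsCut (G : SimpleGraph V) [DecidableRel G.Adj] (k : ℕ) (S : Finset V) : Prop :=
  S.Nonempty ∧ S ≠ Finset.univ ∧ (cutEdges G S).card = k

/-- `(S₁, S₂)` are snug shores for `v` (with respect to the root `r`):
two `k`-cuts avoiding `r` with `v ∉ S₁` and `S₂ = S₁ ∪ {v}`. -/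
def SnugShores (G : SimpleGraph V) [DecidableRel G.Adj] (k : ℕ) (r v : V)
    (S₁ S₂ : Finset V) : Prop :=
  IsCut G k S₁ ∧ IsCut G k S₂ ∧ r ∉ S₁ ∧ r ∉ S₂ ∧ v ∉ S₁ ∧ S₂ = insert v S₁

/-- `v` is a snug vertex (with respect to the root `r`). -/
def Snug (G : SimpleGraph V) [DecidableRel G.Adj] (k : ℕ) (r v : V) : Prop :=
  v ≠ r ∧ k + 1 ≤ G.degree v ∧ ∃ S₁ S₂ : Finset V, SnugShores G k r v S₁ S₂

/-- A snug chain: snug vertices `u 0, …, u t` together with `k`-cuts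
`S 0, …, S (t+1)` such that `(S i, S (i+1))` are snug shores for `u i`. -/
def IsSnugChain (G : SimpleGraph V) [DecidableRel G.Adj] (k : ℕ) (r : V)
    (t : ℕ) (u : ℕ → V) (S : ℕ → Finset V) : Prop :=
  ∀ i ≤ t, Snug G k r (u i) ∧ SnugShores G k r (u i) (S i) (S (i + 1))

/-!
To each path start `v` assign a lower shore `S_v` of minimum size. Uncrossing, i.e.
submodularity of the cut function, shows that these shores are distinct and pairwise nested or
disjoint: two crossing shores would combine into an arc of the chain graph ending in a path
start. Every `k`-cut contains a vertex of degree `k` (Mader), and so does every gap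
`S_v' \ S_v` between nested shores, since otherwise some `S_v'` minus one vertex `w` would be a
`k`-cut, making `w` snug with an arc into `v'`. Finally, a laminar family in which every member
and every such gap contains a vertex of degree `k` has fewer than `2 n_k(G)` members: count it
as a forest.
-/

set_option linter.unusedSectionVars false

section Laminar

variable {α : Type*} [DecidableEq α]

def maxMembers (L : Finset (Finset α)) : Finset (Finset α) :=
  L.filter fun S => ∀ T ∈ L, S ⊆ T → T ⊆ S

lemma mem_maxMembers {L : Finset (Finset α)} {S : Finset α} :
    S ∈ maxMembers L ↔ Maximal (· ∈ L) S := by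
  simp [maxMembers, Maximal]

lemma maxMembers_nonempty {L : Finset (Finset α)} (hL : L.Nonempty) :
    (maxMembers L).Nonempty := by
  obtain ⟨S, hS⟩ := hL
  obtain ⟨T, -, hT⟩ := L.exists_le_maximal hS
  exact ⟨T, mem_maxMembers.2 hT⟩

lemma sup_subset_of_maxMembers_eq_singleton {L : Finset (Finset α)} {C : Finset α}
    (hC : maxMembers L = {C}) : L.sup id ⊆ C :=
  Finset.sup_le fun S hS => by
    obtain ⟨T, hST, hT⟩ := L.exists_le_maximal hS
    have : T ∈ maxMembers L := mem_maxMembers.2 hT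
    rw [hC, mem_singleton] at this
    exact this ▸ hST

lemma card_inter_add_card_sup_inter_le {D M : Finset α} {L L' : Finset (Finset α)} (hM : M ∈ L)
    (hL' : L' ⊆ L) (hdisj : ∀ S ∈ L', Disjoint S M) :
    (M ∩ D).card + (L'.sup id ∩ D).card ≤ (L.sup id ∩ D).card := by
  have hMD : Disjoint (M ∩ D) (L'.sup id ∩ D) :=
    (Finset.disjoint_sup_left.2 hdisj).symm.mono inter_subset_left inter_subset_left
  rw [← card_union_of_disjoint hMD]
  exact card_le_card (union_subset (inter_subset_inter_right (le_sup (f := id) hM))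
    (inter_subset_inter_right (sup_mono hL')))

structure IsLaminarMeeting (D : Finset α) (L : Finset (Finset α)) : Prop where
  nested_or_disjoint : ∀ S ∈ L, ∀ T ∈ L, S ⊆ T ∨ T ⊆ S ∨ Disjoint S T
  inter_nonempty : ∀ S ∈ L, (S ∩ D).Nonempty
  sdiff_inter_nonempty : ∀ S ∈ L, ∀ T ∈ L, S ⊂ T → ((T \ S) ∩ D).Nonempty

namespace IsLaminarMeeting

variable {D : Finset α} {L L' : Finset (Finset α)}

lemma mono (h : IsLaminarMeeting D L) (hL' : L' ⊆ L) : IsLaminarMeeting D L' where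
  nested_or_disjoint S hS T hT := h.nested_or_disjoint S (hL' hS) T (hL' hT)
  inter_nonempty S hS := h.inter_nonempty S (hL' hS)
  sdiff_inter_nonempty S hS T hT := h.sdiff_inter_nonempty S (hL' hS) T (hL' hT)

/-- Either `I` has two maximal members, or a single one `C`, and then the gap `M \ C` contains
a point of `D`. -/
lemma card_add_two_le {M : Finset α} {I : Finset (Finset α)} (h : IsLaminarMeeting D L)
    (hM : M ∈ L) (hIL : I ⊆ L) (hIM : ∀ S ∈ I, S ⊂ M)
    (hI : I.card + (maxMembers I).card ≤ 2 * (I.sup id ∩ D).card) :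
    I.card + 2 ≤ 2 * (M ∩ D).card := by
  have hsup : I.sup id ⊆ M := Finset.sup_le fun S hS => (hIM S hS).1
  have hID : (I.sup id ∩ D).card ≤ (M ∩ D).card :=
    card_le_card (inter_subset_inter_right hsup)
  rcases I.eq_empty_or_nonempty with rfl | hIne
  · simpa using (h.inter_nonempty M hM).card_pos
  obtain hmax | hmax : 2 ≤ (maxMembers I).card ∨ (maxMembers I).card = 1 := by
    have := (maxMembers_nonempty hIne).card_pos; omega
  · omega
  obtain ⟨C, hC⟩ := card_eq_one.1 hmax
  have hCI : C ∈ I := (mem_maxMembers.1 (hC ▸ mem_singleton_self C)).1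
  have hCM := hIM C hCI
  have hCD : (C ∩ D).card < (M ∩ D).card := by
    obtain ⟨x, hx⟩ := h.sdiff_inter_nonempty C (hIL hCI) M hM hCM
    refine card_lt_card ⟨inter_subset_inter_right hCM.1, fun hsub => ?_⟩
    simp only [mem_inter, mem_sdiff] at hx
    exact hx.1.2 (mem_inter.1 (hsub (mem_inter.2 ⟨hx.1.1, hx.2⟩))).1
  have := card_le_card (inter_subset_inter_right (sup_subset_of_maxMembers_eq_singleton hC) :
    I.sup id ∩ D ⊆ C ∩ D)
  omega

lemma eq_or_ssubset_or_disjoint_of_card_le (h : IsLaminarMeeting D L) {M S : Finset α}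
    (hM : M ∈ L) (hMmax : ∀ T ∈ L, T.card ≤ M.card) (hS : S ∈ L) :
    S = M ∨ S ⊂ M ∨ Disjoint S M := by
  rcases h.nested_or_disjoint S hS M hM with hSM | hMS | hSM
  · exact (eq_or_ne S M).imp id fun hne => Or.inl (ssubset_of_subset_of_ne hSM hne)
  · exact Or.inl (eq_of_subset_of_card_le hMS (hMmax S hS)).symm
  · exact Or.inr (Or.inr hSM)

/-- Count `L` as a forest: remove a largest member `M`, and use induction for the members
inside `M` and for those disjoint from `M`. -/
theorem card_add_card_maxMembers_le (h : IsLaminarMeeting D L) :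
    L.card + (maxMembers L).card ≤ 2 * (L.sup id ∩ D).card := by
  induction L using Finset.strongInduction with
  | H L ih =>
  rcases L.eq_empty_or_nonempty with rfl | hL
  · simp [maxMembers]
  obtain ⟨M, hM, hMmax⟩ := L.exists_max_image card hL
  have hsplit S (hS : S ∈ L) := h.eq_or_ssubset_or_disjoint_of_card_le hM hMmax hS
  set In := L.filter (· ⊂ M)
  set Out := L.filter (Disjoint · M)
  have hInL : In ⊆ L := filter_subset _ _
  have hOutL : Out ⊆ L := filter_subset _ _
  have hmemIn : ∀ S ∈ In, S ⊂ M := fun S hS => (mem_filter.1 hS).2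
  have hmemOut : ∀ S ∈ Out, Disjoint S M := fun S hS => (mem_filter.1 hS).2
  have hLsub : L ⊆ insert M (In ∪ Out) := fun S hS => by
    rcases hsplit S hS with rfl | hSM | hSM
    · exact mem_insert_self _ _
    · exact mem_insert_of_mem (mem_union_left _ (mem_filter.2 ⟨hS, hSM⟩))
    · exact mem_insert_of_mem (mem_union_right _ (mem_filter.2 ⟨hS, hSM⟩))
  have hmaxsub : maxMembers L ⊆ insert M (maxMembers Out) := fun S hS => by
    have hSmax := mem_maxMembers.1 hS
    rcases hsplit S hSmax.1 with rfl | hSM | hSM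
    · exact mem_insert_self _ _
    · exact absurd (hSmax.2 hM hSM.1) hSM.not_superset
    · exact mem_insert_of_mem
        (mem_maxMembers.2 (hSmax.mono hOutL (mem_filter.2 ⟨hSmax.1, hSM⟩)))
  have hMOut : M ∉ Out := fun hM' => by
    obtain ⟨x, hx⟩ := (h.inter_nonempty M hM).mono inter_subset_left
    exact disjoint_left.1 (hmemOut M hM') hx hx
  have hMIn : M ∉ In := fun hM' => (hmemIn M hM').ne rfl
  clear_value In Out
  have hIn := h.card_add_two_le hM hInL hmemIn
    (ih In (ssubset_iff_of_subset hInL |>.2 ⟨M, hM, hMIn⟩) (h.mono hInL))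
  have hOut := ih Out (ssubset_iff_of_subset hOutL |>.2 ⟨M, hM, hMOut⟩) (h.mono hOutL)
  have hD := card_inter_add_card_sup_inter_le (D := D) hM hOutL hmemOut
  have := card_le_card hLsub
  have := card_le_card hmaxsub
  have := card_insert_le M (In ∪ Out)
  have := card_insert_le M (maxMembers Out)
  have := card_union_le In Out
  omega

end IsLaminarMeeting

end Laminar

lemma crosses_mk_iff (S : Finset V) (x y : V) :
    Crosses S s(x, y) ↔ (x ∈ S ∧ y ∉ S) ∨ (y ∈ S ∧ x ∉ S) := by
  constructor
  · rintro ⟨a, b, hab, ha, hb⟩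
    rcases Sym2.eq_iff.1 hab with ⟨rfl, rfl⟩ | ⟨rfl, rfl⟩
    exacts [Or.inl ⟨ha, hb⟩, Or.inr ⟨ha, hb⟩]
  · rintro (⟨hx, hy⟩ | ⟨hy, hx⟩)
    exacts [⟨x, y, rfl, hx, hy⟩, ⟨y, x, Sym2.eq_swap, hy, hx⟩]

lemma crosses_compl {S : Finset V} {e : Sym2 V} : Crosses Sᶜ e ↔ Crosses S e := by
  induction e using Sym2.ind with
  | h x y => simp only [crosses_mk_iff, mem_compl]; tauto

namespace SimpleGraph

variable (G : SimpleGraph V) [DecidableRel G.Adj]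

lemma cutEdges_compl (S : Finset V) : cutEdges G Sᶜ = cutEdges G S :=
  filter_congr fun _ _ => crosses_compl

lemma cutEdges_singleton (x : V) : cutEdges G {x} = G.incidenceFinset x := by
  ext e
  induction e using Sym2.ind with
  | h a b =>
    simp only [cutEdges, mem_filter, mem_edgeFinset, mem_incidenceFinset, crosses_mk_iff,
      mem_singleton, mk'_mem_incidenceSet_iff, mem_edgeSet]
    have := G.ne_of_adj (a := a) (b := b)
    grind

lemma card_cutEdges_singleton (x : V) : (cutEdges G {x}).card = G.degree x := by
  rw [cutEdges_singleton, card_incidenceFinset_eq_degree]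

lemma card_cutEdges_inter_add_union_le (A B : Finset V) :
    (cutEdges G (A ∩ B)).card + (cutEdges G (A ∪ B)).card ≤
      (cutEdges G A).card + (cutEdges G B).card := by
  simp only [cutEdges, card_filter, ← sum_add_distrib]
  refine sum_le_sum fun e _ => ?_
  induction e using Sym2.ind with
  | h x y =>
    by_cases hxA : x ∈ A <;> by_cases hxB : x ∈ B <;> by_cases hyA : y ∈ A <;>
      by_cases hyB : y ∈ B <;> simp [crosses_mk_iff, hxA, hxB, hyA, hyB]

/-- `A \ C = A ∩ Cᶜ`, so this is submodularity applied to `A` and `Cᶜ`. -/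
lemma card_cutEdges_sdiff_le (A C : Finset V) :
    (cutEdges G (A \ C)).card ≤ (cutEdges G A).card + (cutEdges G C).card := by
  have := G.card_cutEdges_inter_add_union_le A Cᶜ
  rw [← sdiff_eq_inter_compl, cutEdges_compl] at this
  omega

variable {G}

lemma degree_add_degree_le_card_cutEdges {X : Finset V} {x y : V} (hx : x ∈ X) (hy : y ∈ X)
    (hxy : x ≠ y) (hX : ∀ a ∈ X, ∀ b ∈ X, ¬ G.Adj a b) :
    G.degree x + G.degree y ≤ (cutEdges G X).card := by
  have hdisj : Disjoint (G.incidenceFinset x) (G.incidenceFinset y) := by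
    refine Finset.disjoint_left.2 fun e hex hey => hX x hx y hy ?_
    exact G.adj_of_mem_incidenceSet hxy ((mem_incidenceFinset _ _ _).1 hex)
      ((mem_incidenceFinset _ _ _).1 hey)
  have hsub (z : V) (hz : z ∈ X) : G.incidenceFinset z ⊆ cutEdges G X := by
    intro e he
    obtain ⟨he, hze⟩ := (mem_incidenceFinset _ _ _).1 he
    refine mem_filter.2 ⟨mem_edgeFinset.2 he, ?_⟩
    obtain ⟨w, rfl⟩ := Sym2.mem_iff_exists.1 hze
    exact ⟨z, w, rfl, hz, fun hw => hX z hz w hw he⟩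
  rw [← card_incidenceFinset_eq_degree, ← card_incidenceFinset_eq_degree,
    ← card_union_of_disjoint hdisj]
  exact card_le_card (union_subset (hsub x hx) (hsub y hy))

lemma exists_adj_of_card_cutEdges_le {k : ℕ} {X : Finset V} (hX : 2 ≤ X.card)
    (hdeg : ∀ x ∈ X, k + 1 ≤ G.degree x) (hcut : (cutEdges G X).card ≤ 2 * k + 1) :
    ∃ x ∈ X, ∃ y ∈ X, G.Adj x y := by
  by_contra! hno
  obtain ⟨x, hx, y, hy, hxy⟩ := one_lt_card.1 hX
  have := degree_add_degree_le_card_cutEdges hx hy hxy hno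
  have := hdeg x hx
  have := hdeg y hy
  omega

end SimpleGraph

structure MinimallyEdgeConnected (G : SimpleGraph V) [DecidableRel G.Adj] (k : ℕ) : Prop where
  edgeConnected : EdgeConnected G k
  exists_isCut_crosses : ∀ e ∈ G.edgeSet, ∃ S : Finset V, IsCut G k S ∧ Crosses S e

section Cuts

variable {G : SimpleGraph V} [DecidableRel G.Adj] {k : ℕ} {r : V} {A B C : Finset V}

lemma IsCut.compl (hA : IsCut G k A) : IsCut G k Aᶜ :=
  ⟨nonempty_iff_ne_empty.2 (by rw [Ne, compl_eq_empty_iff]; exact hA.2.1),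
    by rw [Ne, compl_eq_univ_iff]; exact hA.1.ne_empty, by rw [G.cutEdges_compl]; exact hA.2.2⟩

lemma IsCut.exists_not_mem (hA : IsCut G k A) : ∃ r, r ∉ A := by
  by_contra! h
  exact hA.2.1 (eq_univ_of_forall h)

lemma not_isCut_singleton {x : V} (hx : k + 1 ≤ G.degree x) : ¬ IsCut G k {x} := fun h => by
  have := h.2.2
  rw [G.card_cutEdges_singleton] at this
  omega

lemma EdgeConnected.le_degree (hG : EdgeConnected G k) {x y : V} (hxy : x ≠ y) :
    k ≤ G.degree x := by
  rw [← G.card_cutEdges_singleton]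
  exact hG {x} (singleton_nonempty x) fun h => hxy.symm (mem_singleton.1 (h ▸ mem_univ y))

lemma EdgeConnected.succ_le_degree (hG : EdgeConnected G k) {x y : V} (hxy : x ≠ y)
    (hx : G.degree x ≠ k) : k + 1 ≤ G.degree x :=
  (hG.le_degree hxy).lt_of_ne hx.symm

/-- Uncrossing: submodularity forces both sides to be `k`-cuts once both are proper and
nonempty, which the common non-member `r` guarantees. -/
lemma IsCut.inter_and_union (hG : EdgeConnected G k) (hA : IsCut G k A) (hB : IsCut G k B)
    (hAB : (A ∩ B).Nonempty) (hrA : r ∉ A) (hrB : r ∉ B) :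
    IsCut G k (A ∩ B) ∧ IsCut G k (A ∪ B) := by
  have hU : A ∪ B ≠ univ := fun h => by
    have hr : r ∈ A ∪ B := h ▸ mem_univ r
    simp [hrA, hrB] at hr
  have hI : A ∩ B ≠ univ := fun h => hrA (mem_inter.1 (h ▸ mem_univ r)).1
  have hUne : (A ∪ B).Nonempty := hAB.mono inter_subset_union
  have h1 := hG _ hAB hI
  have h2 := hG _ hUne hU
  have h3 := G.card_cutEdges_inter_add_union_le A B
  rw [hA.2.2, hB.2.2] at h3
  exact ⟨⟨hAB, hI, by omega⟩, ⟨hUne, hU, by omega⟩⟩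

namespace MinimallyEdgeConnected

lemma exists_isCut_inter_split (hG : MinimallyEdgeConnected G k) (hA : IsCut G k A)
    (hrA : r ∉ A) {X : Finset V} (hXA : X ⊆ A) {x y : V} (hx : x ∈ X) (hy : y ∈ X)
    (hxy : G.Adj x y) :
    ∃ T, r ∉ T ∧ IsCut G k (A ∩ T) ∧ (∃ a ∈ X, a ∈ T) ∧ ∃ b ∈ X, b ∉ T := by
  obtain ⟨S, hS, hSxy⟩ := hG.exists_isCut_crosses s(x, y) hxy
  obtain ⟨T, hT, hTxy, hrT⟩ : ∃ T, IsCut G k T ∧ Crosses T s(x, y) ∧ r ∉ T := by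
    by_cases hrS : r ∈ S
    · exact ⟨Sᶜ, hS.compl, crosses_compl.2 hSxy, by simpa using hrS⟩
    · exact ⟨S, hS, hSxy, hrS⟩
  obtain ⟨a, b, hab, ha, hb⟩ := hTxy
  have hmem : ∀ z ∈ s(a, b), z ∈ X := fun z hz => by
    rw [← hab, Sym2.mem_iff] at hz
    rcases hz with rfl | rfl <;> assumption
  have haX := hmem a (Sym2.mem_mk_left a b)
  exact ⟨T, hrT,
    (hA.inter_and_union hG.edgeConnected hT ⟨a, mem_inter.2 ⟨hXA haX, ha⟩⟩ hrA hrT).1,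
    ⟨a, haX, ha⟩, b, hmem b (Sym2.mem_mk_right a b), hb⟩

/-- Mader's lemma: every `k`-cut contains a vertex of degree `k`. A minimal counterexample
`A` would have two vertices of degree `> k`, hence an inner edge, and the `k`-cut through that
edge cuts `A` down to a smaller counterexample. -/
theorem exists_degree_eq_of_isCut (hG : MinimallyEdgeConnected G k) (hA : IsCut G k A) :
    ∃ x ∈ A, G.degree x = k := by
  induction A using Finset.strongInduction with
  | H A ih =>
  obtain ⟨r, hrA⟩ := hA.exists_not_mem
  by_contra! hdeg
  have hdeg' : ∀ x ∈ A, k + 1 ≤ G.degree x := fun x hx =>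
    hG.edgeConnected.succ_le_degree (ne_of_mem_of_not_mem hx hrA) (hdeg x hx)
  have hcard : 2 ≤ A.card := by
    by_contra! h
    obtain ⟨x, rfl⟩ := card_eq_one.1 (show A.card = 1 by have := hA.1.card_pos; omega)
    exact not_isCut_singleton (hdeg' x (mem_singleton_self x)) hA
  obtain ⟨x, hx, y, hy, hxy⟩ :=
    G.exists_adj_of_card_cutEdges_le hcard hdeg' (by rw [hA.2.2]; omega)
  obtain ⟨T, -, hT, -, b, hb, hbT⟩ := hG.exists_isCut_inter_split hA hrA subset_rfl hx hy hxy
  obtain ⟨z, hz, hzk⟩ := ih (A ∩ T)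
    (ssubset_iff_of_subset inter_subset_left |>.2 ⟨b, hb, fun h => hbT (mem_inter.1 h).2⟩) hT
  exact hdeg z (mem_inter.1 hz).1 hzk

/-- An edge inside the gap `A \ C` gives a `k`-cut `A ∩ T` meeting the gap. If it also meets
`C`, then `C ∪ (A ∩ T)` lies strictly between `C` and `A`; otherwise it lies in the gap and
Mader's lemma applies. -/
lemma exists_degree_eq_sdiff (hG : MinimallyEdgeConnected G k) (hA : IsCut G k A) (hrA : r ∉ A)
    (hC : IsCut G k C) (hCA : C ⊆ A) (hmax : ∀ C', IsCut G k C' → C ⊂ C' → ¬ C' ⊂ A)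
    (h2 : 2 ≤ (A \ C).card) :
    ∃ x ∈ A \ C, G.degree x = k := by
  by_contra! hdeg
  have hdeg' : ∀ x ∈ A \ C, k + 1 ≤ G.degree x := fun x hx =>
    hG.edgeConnected.succ_le_degree (ne_of_mem_of_not_mem (mem_sdiff.1 hx).1 hrA) (hdeg x hx)
  have hcut : (cutEdges G (A \ C)).card ≤ 2 * k + 1 := by
    have := G.card_cutEdges_sdiff_le A C
    rw [hA.2.2, hC.2.2] at this
    omega
  obtain ⟨x, hx, y, hy, hxy⟩ := G.exists_adj_of_card_cutEdges_le h2 hdeg' hcut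
  obtain ⟨T, hrT, hT, ⟨a, ha, haT⟩, b, hb, hbT⟩ :=
    hG.exists_isCut_inter_split hA hrA sdiff_subset hx hy hxy
  rw [mem_sdiff] at ha hb
  by_cases hTC : (A ∩ T ∩ C).Nonempty
  · have hU := (hT.inter_and_union hG.edgeConnected hC hTC (fun h => hrA (mem_inter.1 h).1)
      (fun h => hrA (hCA h))).2
    refine hmax _ hU (ssubset_iff_of_subset subset_union_right |>.2 ⟨a, ?_, ha.2⟩)
      (ssubset_iff_of_subset (union_subset inter_subset_left hCA) |>.2 ⟨b, hb.1, ?_⟩)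
    · exact mem_union_left _ (mem_inter.2 ⟨ha.1, haT⟩)
    · simp [hbT, hb.2]
  · obtain ⟨z, hz, hzk⟩ := hG.exists_degree_eq_of_isCut hT
    have hzC : z ∉ C := fun h => hTC ⟨z, mem_inter.2 ⟨hz, h⟩⟩
    exact hdeg z (mem_sdiff.2 ⟨(mem_inter.1 hz).1, hzC⟩) hzk

/-- Apply `exists_degree_eq_sdiff` to a largest `k`-cut `C` with `B ⊆ C ⊂ A`; if the gap
`A \ C` is a single vertex `w`, then `C = A.erase w`. -/
theorem exists_degree_eq_or_isCut_erase (hG : MinimallyEdgeConnected G k) (hA : IsCut G k A)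
    (hrA : r ∉ A) (hB : IsCut G k B) (hBA : B ⊂ A) :
    (∃ x ∈ A \ B, G.degree x = k) ∨
      ∃ w ∈ A \ B, k + 1 ≤ G.degree w ∧ IsCut G k (A.erase w) := by
  classical
  obtain ⟨C, hC, hCmax⟩ := exists_max_image
    ({C | IsCut G k C ∧ B ⊆ C ∧ C ⊂ A} : Finset (Finset V)) card ⟨B, by simp [hB, hBA]⟩
  simp only [mem_filter, mem_univ, true_and] at hC hCmax
  obtain ⟨hCcut, hBC, hCA⟩ := hC
  have hsub : A \ C ⊆ A \ B := sdiff_subset_sdiff subset_rfl hBC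
  obtain h2 | h1 : 2 ≤ (A \ C).card ∨ (A \ C).card = 1 := by
    have := (sdiff_nonempty.2 hCA.not_subset).card_pos
    omega
  · refine Or.inl ?_
    obtain ⟨x, hx, hxk⟩ := hG.exists_degree_eq_sdiff hA hrA hCcut hCA.1
      (fun C' hC' hCC' hC'A => (card_lt_card hCC').not_ge
        (hCmax C' ⟨hC', hBC.trans hCC'.1, hC'A⟩)) h2
    exact ⟨x, hsub hx, hxk⟩
  · obtain ⟨w, hw⟩ := card_eq_one.1 h1
    have hwAB : w ∈ A \ B := hsub (hw ▸ mem_singleton_self w)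
    have hCw : A.erase w = C := by
      rw [← sdiff_singleton_eq_erase, ← hw, Finset.sdiff_sdiff_eq_self hCA.1]
    by_cases hwk : G.degree w = k
    · exact Or.inl ⟨w, hwAB, hwk⟩
    · exact Or.inr ⟨w, hwAB, hG.edgeConnected.succ_le_degree
        (ne_of_mem_of_not_mem (mem_sdiff.1 hwAB).1 hrA) hwk, hCw ▸ hCcut⟩

theorem exists_degree_eq (hG : MinimallyEdgeConnected G k) (hV : 2 ≤ Fintype.card V) :
    ∃ x, G.degree x = k := by
  obtain ⟨x, y, hxy⟩ := Fintype.exists_pair_of_one_lt_card hV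
  by_cases hx : ∃ z, G.Adj x z
  · obtain ⟨z, hz⟩ := hx
    obtain ⟨S, hS, -⟩ := hG.exists_isCut_crosses s(x, z) hz
    obtain ⟨w, -, hw⟩ := hG.exists_degree_eq_of_isCut hS
    exact ⟨w, hw⟩
  · push Not at hx
    refine ⟨x, le_antisymm ?_ (hG.edgeConnected.le_degree hxy)⟩
    have hN : G.neighborFinset x = ∅ := by
      ext z
      simp [hx]
    rw [← G.card_neighborFinset_eq_degree, hN, card_empty]
    exact Nat.zero_le k

end MinimallyEdgeConnected

end Cuts

section Snug

variable {G : SimpleGraph V} [DecidableRel G.Adj] {k : ℕ} {r v v' w : V} {S S' : Finset V}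

/-- `v` has no incoming arc in the chain graph, i.e. it is the first vertex of a snug path. -/
def IsPathStart (G : SimpleGraph V) [DecidableRel G.Adj] (k : ℕ) (r v : V) : Prop :=
  Snug G k r v ∧ ¬ ∃ (w : V) (T₁ T₂ S₁ S₂ : Finset V), Snug G k r w ∧
    SnugShores G k r w T₁ T₂ ∧ SnugShores G k r v S₁ S₂ ∧ T₂ = S₁

def IsMinLowerShore (G : SimpleGraph V) [DecidableRel G.Adj] (k : ℕ) (r v : V)
    (S : Finset V) : Prop :=
  SnugShores G k r v S (insert v S) ∧
    ∀ S', SnugShores G k r v S' (insert v S') → S.card ≤ S'.card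

lemma snugShores_insert (hS : IsCut G k S) (hvS : IsCut G k (insert v S))
    (hr : r ∉ insert v S) (hv : v ∉ S) : SnugShores G k r v S (insert v S) :=
  ⟨hS, hvS, fun h => hr (mem_insert_of_mem h), hr, hv, rfl⟩

lemma Snug.exists_isMinLowerShore (hv : Snug G k r v) : ∃ S, IsMinLowerShore G k r v S := by
  classical
  obtain ⟨-, -, S₁, S₂, hS₁, hS₂, hr₁, hr₂, hv₁, rfl⟩ := hv
  obtain ⟨S, hS, hSmin⟩ := exists_min_image
    ({S | SnugShores G k r v S (insert v S)} : Finset (Finset V)) card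
    ⟨S₁, mem_filter.2 ⟨mem_univ _, hS₁, hS₂, hr₁, hr₂, hv₁, rfl⟩⟩
  simp only [mem_filter, mem_univ, true_and] at hS hSmin
  exact ⟨S, hS, hSmin⟩

lemma IsPathStart.not_snugShores {T : Finset V} (hv : IsPathStart G k r v) (hw : Snug G k r w)
    (hT : SnugShores G k r w T S) : ¬ SnugShores G k r v S (insert v S) :=
  fun hS => hv.2 ⟨w, T, S, S, _, hw, hT, hS, rfl⟩

/-- Otherwise `w` would be snug with upper shore `S`, an arc into `v`. -/
lemma IsPathStart.not_isCut_erase (hv : IsPathStart G k r v)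
    (hS : SnugShores G k r v S (insert v S)) (hwS : w ∈ S) (hw : k + 1 ≤ G.degree w) :
    ¬ IsCut G k (S.erase w) := fun hSw => by
  have hrS : r ∉ S := hS.2.2.1
  have hshores : SnugShores G k r w (S.erase w) S :=
    ⟨hSw, hS.1, fun h => hrS (mem_of_mem_erase h), hrS, notMem_erase w S,
      (insert_erase hwS).symm⟩
  exact hv.not_snugShores ⟨ne_of_mem_of_not_mem hwS hrS, hw, _, _, hshores⟩ hshores hS

/-- Intersecting with `T` gives a lower shore of `v` again; it cannot shrink to `∅`, since
then `{v}` would be a `k`-cut although `v` has degree `> k`. -/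
lemma IsMinLowerShore.ssubset_of_mem {T : Finset V} (hG : EdgeConnected G k)
    (hv : k + 1 ≤ G.degree v) (hS : IsMinLowerShore G k r v S) (hT : IsCut G k T)
    (hrT : r ∉ T) (hvT : v ∈ T) : S ⊂ T := by
  obtain ⟨⟨hScut, hvScut, hrS, hrvS, hvS, -⟩, hmin⟩ := hS
  have hI := (hvScut.inter_and_union hG hT ⟨v, mem_inter.2 ⟨mem_insert_self v S, hvT⟩⟩
    hrvS hrT).1
  rw [insert_inter_of_mem hvT] at hI
  have hne : (S ∩ T).Nonempty := by
    rw [nonempty_iff_ne_empty]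
    intro h
    rw [h, insert_empty] at hI
    exact not_isCut_singleton hv hI
  have hST := (hScut.inter_and_union hG hT hne hrS hrT).1
  have hcard := hmin _ (snugShores_insert hST hI
    (fun h => hrvS (insert_subset_insert v inter_subset_left h)) (fun h => hvS (mem_inter.1 h).1))
  have hSsub : S ⊆ T := eq_of_subset_of_card_le inter_subset_left hcard ▸ inter_subset_right
  exact ssubset_of_subset_of_ne hSsub fun h => hvS (h ▸ hvT)

/-- Crossing lower shores uncross into an arc `v → v'`: with `U = S ∪ S'`, the pairs
`(U, U ∪ {v})` and `(U ∪ {v}, U ∪ {v, v'})` are snug shores for `v` and `v'`. -/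
lemma IsPathStart.disjoint_of_snugShores (hG : EdgeConnected G k) (hv' : IsPathStart G k r v')
    (hv : Snug G k r v) (hS : SnugShores G k r v S (insert v S))
    (hS' : SnugShores G k r v' S' (insert v' S')) (hvv' : v ≠ v') (hvS' : v ∉ S')
    (hv'S : v' ∉ S) : Disjoint S S' := by
  obtain ⟨hScut, hvScut, hrS, hrvS, hvS, -⟩ := hS
  obtain ⟨hS'cut, hv'S'cut, hrS', hrv'S', hv'S', -⟩ := hS'
  have hrv : r ≠ v := fun h => hrvS (h ▸ mem_insert_self v S)
  have hrv' : r ≠ v' := fun h => hrv'S' (h ▸ mem_insert_self v' S')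
  rw [disjoint_iff_inter_eq_empty, ← not_nonempty_iff_eq_empty]
  intro hSS'
  have hU := (hScut.inter_and_union hG hS'cut hSS' hrS hrS').2
  have hvU : IsCut G k (insert v (S ∪ S')) := by
    rw [← insert_union]
    exact (hvScut.inter_and_union hG hS'cut
      (hSS'.mono (inter_subset_inter_right (subset_insert v S))) hrvS hrS').2
  have hv'U : IsCut G k (insert v' (S ∪ S')) := by
    rw [← union_insert]
    exact (hScut.inter_and_union hG hv'S'cut
      (hSS'.mono (inter_subset_inter_left (subset_insert v' S'))) hrS hrv'S').2
  have hrvU : r ∉ insert v (S ∪ S') := by simp [hrv, hrS, hrS']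
  have hvv'U : IsCut G k (insert v' (insert v (S ∪ S'))) := by
    have hinter : (S ∩ S') ⊆ insert v (S ∪ S') ∩ insert v' (S ∪ S') := fun x hx => by
      simp only [mem_inter, mem_insert, mem_union] at hx ⊢
      tauto
    have := (hvU.inter_and_union hG hv'U (hSS'.mono hinter) hrvU (by simp [hrv', hrS, hrS'])).2
    convert this using 1
    ext
    simp only [mem_insert, mem_union]
    tauto
  exact hv'.not_snugShores hv (snugShores_insert hU hvU hrvU (by simp [hvS, hvS']))
    (snugShores_insert hvU hvv'U (by simp [hrv, hrv', hrS, hrS'])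
      (by simp [hvv'.symm, hv'S, hv'S']))

lemma IsPathStart.nested_or_disjoint (hG : EdgeConnected G k) (hv : IsPathStart G k r v)
    (hv' : IsPathStart G k r v') (hvv' : v ≠ v') (hS : IsMinLowerShore G k r v S)
    (hS' : IsMinLowerShore G k r v' S') : S ⊂ S' ∨ S' ⊂ S ∨ Disjoint S S' := by
  by_cases hvS' : v ∈ S'
  · exact Or.inl (hS.ssubset_of_mem hG hv.1.2.1 hS'.1.1 hS'.1.2.2.1 hvS')
  by_cases hv'S : v' ∈ S
  · exact Or.inr (Or.inl (hS'.ssubset_of_mem hG hv'.1.2.1 hS.1.1 hS.1.2.2.1 hv'S))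
  exact Or.inr (Or.inr (hv'.disjoint_of_snugShores hG hv.1 hS.1 hS'.1 hvv' hvS' hv'S))

variable {P : Finset V} {f : V → Finset V}

lemma injOn_of_isMinLowerShore (hG : EdgeConnected G k) (hP : ∀ v ∈ P, IsPathStart G k r v)
    (hf : ∀ v ∈ P, IsMinLowerShore G k r v (f v)) : Set.InjOn f P := by
  intro v hv v' hv' h
  by_contra hvv'
  rcases (hP v hv).nested_or_disjoint hG (hP v' hv') hvv' (hf v hv) (hf v' hv') with h' | h' | h'
  · exact h'.ne h
  · exact h'.ne h.symm
  · rw [h, disjoint_self_iff_empty] at h'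
    exact (hf v' hv').1.1.1.ne_empty h'

theorem isLaminarMeeting_image (hG : MinimallyEdgeConnected G k)
    (hP : ∀ v ∈ P, IsPathStart G k r v) (hf : ∀ v ∈ P, IsMinLowerShore G k r v (f v)) :
    IsLaminarMeeting {x | G.degree x = k} (P.image f) where
  nested_or_disjoint := by
    simp only [forall_mem_image]
    intro v hv v' hv'
    rcases eq_or_ne v v' with rfl | hvv'
    · exact Or.inl subset_rfl
    rcases (hP v hv).nested_or_disjoint hG.edgeConnected (hP v' hv') hvv' (hf v hv) (hf v' hv')
      with h | h | h
    exacts [Or.inl h.1, Or.inr (Or.inl h.1), Or.inr (Or.inr h)]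
  inter_nonempty := by
    simp only [forall_mem_image]
    intro v hv
    obtain ⟨x, hx, hxk⟩ := hG.exists_degree_eq_of_isCut (hf v hv).1.1
    exact ⟨x, mem_inter.2 ⟨hx, by simpa using hxk⟩⟩
  sdiff_inter_nonempty := by
    simp only [forall_mem_image]
    intro v hv v' hv' hss
    obtain ⟨hA, -, hrA, -⟩ := (hf v' hv').1
    rcases hG.exists_degree_eq_or_isCut_erase hA hrA (hf v hv).1.1 hss
      with ⟨x, hx, hxk⟩ | ⟨w, hw, hwk, hcut⟩
    · exact ⟨x, mem_inter.2 ⟨hx, by simpa using hxk⟩⟩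
    · exact absurd hcut ((hP v' hv').not_isCut_erase (hf v' hv').1 (mem_sdiff.1 hw).1 hwk)

end Snug

theorem num_snug_paths_lt_general
    (k : ℕ) (hV : 2 ≤ Fintype.card V)
    (G : SimpleGraph V) [DecidableRel G.Adj] (hG : EdgeConnected G k)
    (hmin : ∀ e ∈ G.edgeSet, ∃ S : Finset V, IsCut G k S ∧ Crosses S e)
    (r : V) :
    {v : V | Snug G k r v ∧
        ¬ ∃ (w : V) (T₁ T₂ S₁ S₂ : Finset V), Snug G k r w ∧
          SnugShores G k r w T₁ T₂ ∧ SnugShores G k r v S₁ S₂ ∧ T₂ = S₁}.ncard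
      < 2 * {v : V | G.degree v = k}.ncard := by
  have hG' : MinimallyEdgeConnected G k := ⟨hG, hmin⟩
  classical
  set P : Finset V := {v | IsPathStart G k r v}
  have hP : ∀ v ∈ P, IsPathStart G k r v := fun v hv => (mem_filter.1 hv).2
  choose! f hf using fun v (hv : v ∈ P) => (hP v hv).1.exists_isMinLowerShore
  have hcount := (isLaminarMeeting_image hG' hP hf).card_add_card_maxMembers_le
  rw [card_image_of_injOn (injOn_of_isMinLowerShore hG hP hf)] at hcount
  have hD := card_le_card (inter_subset_right (s₁ := (P.image f).sup id)
    (s₂ := {x | G.degree x = k}))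
  obtain ⟨x, hx⟩ := hG'.exists_degree_eq hV
  have hDpos : 0 < ({x | G.degree x = k} : Finset V).card := card_pos.2 ⟨x, by simpa using hx⟩
  have hPD : P.card < 2 * ({x | G.degree x = k} : Finset V).card := by
    rcases P.eq_empty_or_nonempty with h | h
    · simp [h, hDpos]
    · have := (maxMembers_nonempty (h.image f)).card_pos
      omega
  change {v | IsPathStart G k r v}.ncard < 2 * {v | G.degree v = k}.ncard
  rwa [← coe_filter_univ, ← coe_filter_univ, Set.ncard_coe_finset, Set.ncard_coe_finset]

/-- The number of snug paths, i.e. of snug vertices with no incoming arc in the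
chain graph, is less than twice the number of vertices of degree `k`. -/
theorem num_snug_paths_lt
    (k : ℕ) (hk : 1 ≤ k) (hV : 2 ≤ Fintype.card V)
    (G : SimpleGraph V) [DecidableRel G.Adj] (hG : EdgeConnected G k)
    (hmin : ∀ e ∈ G.edgeSet, ∃ S : Finset V, IsCut G k S ∧ Crosses S e)
    (r : V) :
    {v : V | Snug G k r v ∧
        ¬ ∃ (w : V) (T₁ T₂ S₁ S₂ : Finset V), Snug G k r w ∧
          SnugShores G k r w T₁ T₂ ∧ SnugShores G k r v S₁ S₂ ∧ T₂ = S₁}.ncard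
      < 2 * {v : V | G.degree v = k}.ncard :=
  num_snug_paths_lt_general k hV G hG hmin r
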